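/- Let K > 2 and let (ξ^{(n)}_{i,j})_{1≤i,j≤n}, n ≥ 2, be arrays of i.i.d. Bernoulli(p_n) random variables with p_n ∈ (0,1). If ∑_{n≥2} n·exp( − 3(K−2)²/(6+2(K−2)) · p_n n ) < ∞, then almost surely there exists n_0 such that for all n ≥ n_0 and all i ∈ {1,...,n}, both ∑_{j=1}^n |ξ^{(n)}_{i,j}/p_n − 1| ≤ Kn and ∑_{j=1}^n |ξ^{(n)}_{j,i}/p_n − 1| ≤ Kn. -/

import Mathlib

/-!
Bernstein's bound for sums of Bernoulli variables: by the Chernoff bound with the tilt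
`t = log (1 + δ)`, `P(S ≥ (1 + δ) p m) ≤ exp (-h(δ) p m)` with `h(δ) = (1 + δ) log (1 + δ) - δ`,
and `h(δ) ≥ 3δ² / (6 + 2δ)`. A union bound over the `n` rows and `n` columns of the `n`-th array
gives a failure probability of at most `2 n exp (-3(K-2)²/(6+2(K-2)) p_n n)`, which is summable,
so Borel–Cantelli shows that almost surely every row and column sum stays below `(K - 1) p_n n`
for all large `n`; that bound on the sum bounds the `ℓ¹` deviation by `K n`.
-/

open MeasureTheory ProbabilityTheory Real Filter Set

lemma three_mul_sq_div_le_mul_log_one_add_sub {x : ℝ} (hx : 0 ≤ x) :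
    3 * x ^ 2 / (6 + 2 * x) ≤ (1 + x) * log (1 + x) - x := by
  set g : ℝ → ℝ := fun y => (6 + 2 * y) * ((1 + y) * log (1 + y) - y) - 3 * y ^ 2
  have hg : ∀ y, 0 ≤ y → HasDerivAt g (4 * ((y + 2) * log (1 + y) - 2 * y)) y := by
    intro y hy
    have h1 : HasDerivAt (fun y : ℝ => 1 + y) 1 y := (hasDerivAt_id y).const_add 1
    have hlog := h1.log (by positivity)
    refine ((((hasDerivAt_id y).const_mul 2).const_add 6).mul ((h1.mul hlog).sub
      (hasDerivAt_id y))).sub ((hasDerivAt_pow 2 y).const_mul 3) |>.congr_deriv ?_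
    simp only [Pi.mul_apply, Pi.sub_apply, id]
    field_simp
    ring
  have hmono : MonotoneOn g (Ici 0) := by
    refine monotoneOn_of_hasDerivWithinAt_nonneg
      (f' := fun y => 4 * ((y + 2) * log (1 + y) - 2 * y)) (convex_Ici 0)
      (fun y hy => (hg y hy).continuousAt.continuousWithinAt) (fun y hy => ?_) (fun y hy => ?_)
      <;> rw [interior_Ici] at hy
    · exact (hg y (le_of_lt hy)).hasDerivWithinAt
    · have := le_log_one_add_of_nonneg (le_of_lt hy)
      rw [div_le_iff₀ (by linarith [mem_Ioi.1 hy])] at this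
      linarith
  have hg0 : g 0 ≤ g x := hmono self_mem_Ici hx hx
  rw [div_le_iff₀ (by positivity)]
  norm_num [g] at hg0
  linarith

section Bernoulli

variable {Ω : Type*} [MeasurableSpace Ω] {μ : Measure Ω} {X : Ω → ℝ} {p : ℝ}

lemma exp_mul_eq_of_eq_zero_or_eq_one {x : ℝ} (hx : x = 0 ∨ x = 1) (t : ℝ) :
    exp (t * x) = 1 + (exp t - 1) * x := by
  rcases hx with rfl | rfl <;> simp

lemma integrable_of_eq_zero_or_eq_one [IsFiniteMeasure μ] (hmeas : Measurable X)
    (hval : ∀ ω, X ω = 0 ∨ X ω = 1) : Integrable X μ :=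
  .of_bound hmeas.aestronglyMeasurable 1 <| ae_of_all _ fun ω => by
    rcases hval ω with h | h <;> simp [h]

lemma integrable_exp_mul_of_eq_zero_or_eq_one [IsFiniteMeasure μ] (hmeas : Measurable X)
    (hval : ∀ ω, X ω = 0 ∨ X ω = 1) (t : ℝ) : Integrable (fun ω => exp (t * X ω)) μ := by
  simp_rw [exp_mul_eq_of_eq_zero_or_eq_one (hval _)]
  exact (integrable_const 1).add ((integrable_of_eq_zero_or_eq_one hmeas hval).const_mul _)

lemma integral_eq_of_bernoulli (hmeas : Measurable X) (hval : ∀ ω, X ω = 0 ∨ X ω = 1)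
    (hp : 0 ≤ p) (hber : μ {ω | X ω = 1} = ENNReal.ofReal p) : ∫ ω, X ω ∂μ = p := by
  have hX : ∀ ω, X ω = {ω | X ω = 1}.indicator 1 ω := fun ω => by
    rcases hval ω with h | h <;> simp [h]
  rw [integral_congr_ae (ae_of_all _ hX),
    integral_indicator_one (s := {ω | X ω = 1}) (hmeas (measurableSet_singleton 1)),
    measureReal_def, hber, ENNReal.toReal_ofReal hp]

lemma mgf_eq_of_bernoulli [IsProbabilityMeasure μ] (hmeas : Measurable X)
    (hval : ∀ ω, X ω = 0 ∨ X ω = 1) (hp : 0 ≤ p) (hber : μ {ω | X ω = 1} = ENNReal.ofReal p)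
    (t : ℝ) : mgf X μ t = 1 + p * (exp t - 1) := by
  simp_rw [mgf, exp_mul_eq_of_eq_zero_or_eq_one (hval _)]
  rw [integral_add (integrable_const 1) ((integrable_of_eq_zero_or_eq_one hmeas hval).const_mul _),
    integral_const_mul, integral_eq_of_bernoulli hmeas hval hp hber]
  simp only [integral_const, probReal_univ, smul_eq_mul, one_mul]
  ring

end Bernoulli

section Bernstein

variable {Ω ι : Type*} [MeasurableSpace Ω] {μ : Measure Ω} [IsProbabilityMeasure μ] [Fintype ι]
  {X : ι → Ω → ℝ} {p δ : ℝ}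

lemma measureReal_sum_ge_le_of_bernoulli (hmeas : ∀ i, Measurable (X i)) (hind : iIndepFun X μ)
    (hval : ∀ i ω, X i ω = 0 ∨ X i ω = 1) (hp : 0 ≤ p)
    (hber : ∀ i, μ {ω | X i ω = 1} = ENNReal.ofReal p) (hδ : 0 ≤ δ) :
    μ.real {ω | (1 + δ) * (p * Fintype.card ι) ≤ ∑ i, X i ω} ≤
      exp (-(3 * δ ^ 2 / (6 + 2 * δ)) * (p * Fintype.card ι)) := by
  set m : ℝ := (Fintype.card ι : ℝ)
  set t := log (1 + δ)
  have hexp_t : exp t = 1 + δ := exp_log (by linarith)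
  have hint : Integrable (fun ω => exp (t * (∑ i, X i) ω)) μ :=
    hind.integrable_exp_mul_sum hmeas fun i _ =>
      integrable_exp_mul_of_eq_zero_or_eq_one (hmeas i) (hval i) t
  have hmgf : mgf (∑ i, X i) μ t ≤ exp (m * (p * δ)) := by
    calc mgf (∑ i, X i) μ t = ∏ _i : ι, (1 + p * δ) := by
          rw [hind.mgf_sum hmeas]
          simp_rw [mgf_eq_of_bernoulli (hmeas _) (hval _) hp (hber _), hexp_t, add_sub_cancel_left]
      _ ≤ ∏ _i : ι, exp (p * δ) :=
          Finset.prod_le_prod (fun _ _ => by positivity) fun _ _ => by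
            linarith [add_one_le_exp (p * δ)]
      _ = exp (m * (p * δ)) := by rw [Finset.prod_const, ← exp_nat_mul, Finset.card_univ]
  have hrate : -t * ((1 + δ) * (p * m)) + m * (p * δ) ≤
      -(3 * δ ^ 2 / (6 + 2 * δ)) * (p * m) := by
    have := mul_le_mul_of_nonneg_left (three_mul_sq_div_le_mul_log_one_add_sub hδ)
      (by positivity : 0 ≤ p * m)
    linarith
  have hchernoff := measure_ge_le_exp_mul_mgf ((1 + δ) * (p * m)) (log_nonneg (by linarith)) hint
  simp only [Finset.sum_apply] at hchernoff
  calc _ ≤ exp (-t * ((1 + δ) * (p * m))) * mgf (∑ i, X i) μ t := hchernoff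
    _ ≤ exp (-t * ((1 + δ) * (p * m))) * exp (m * (p * δ)) := by gcongr
    _ ≤ _ := by rw [← exp_add]; exact exp_le_exp.2 hrate

end Bernstein

section Array

variable {Ω : Type*} [MeasurableSpace Ω] {μ : Measure Ω} [IsProbabilityMeasure μ] {n : ℕ}
  {X : Fin n → Fin n → Ω → ℝ} {p δ : ℝ}

def rowOrColSumGe (X : Fin n → Fin n → Ω → ℝ) (c : ℝ) : Set Ω :=
  ⋃ i, {ω | c ≤ ∑ j, X i j ω} ∪ {ω | c ≤ ∑ j, X j i ω}

lemma measureReal_rowOrColSumGe_le (hmeas : ∀ i j, Measurable (X i j))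
    (hind : iIndepFun (fun ij : Fin n × Fin n => X ij.1 ij.2) μ)
    (hval : ∀ i j ω, X i j ω = 0 ∨ X i j ω = 1) (hp : 0 ≤ p)
    (hber : ∀ i j, μ {ω | X i j ω = 1} = ENNReal.ofReal p) (hδ : 0 ≤ δ) :
    μ.real (rowOrColSumGe X ((1 + δ) * (p * n))) ≤
      2 * (n * exp (-(3 * δ ^ 2 / (6 + 2 * δ)) * (p * n))) := by
  set B := exp (-(3 * δ ^ 2 / (6 + 2 * δ)) * (p * n))
  have hrow (i : Fin n) : μ.real {ω | (1 + δ) * (p * n) ≤ ∑ j, X i j ω} ≤ B := by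
    have hind_row : iIndepFun (X i) μ := hind.precomp (g := Prod.mk i) (Prod.mk_right_injective i)
    have := measureReal_sum_ge_le_of_bernoulli (hmeas i) hind_row (hval i) hp (hber i) hδ
    rwa [Fintype.card_fin] at this
  have hcol (i : Fin n) : μ.real {ω | (1 + δ) * (p * n) ≤ ∑ j, X j i ω} ≤ B := by
    have hind_col : iIndepFun (X · i) μ := hind.precomp (g := (·, i)) (Prod.mk_left_injective i)
    have := measureReal_sum_ge_le_of_bernoulli (hmeas · i) hind_col (hval · i) hp (hber · i) hδ
    rwa [Fintype.card_fin] at this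
  calc _ ≤ ∑ i, μ.real ({ω | (1 + δ) * (p * n) ≤ ∑ j, X i j ω} ∪
        {ω | (1 + δ) * (p * n) ≤ ∑ j, X j i ω}) := measureReal_iUnion_fintype_le _
    _ ≤ ∑ _i : Fin n, (B + B) := Finset.sum_le_sum fun i _ =>
        (measureReal_union_le _ _).trans (add_le_add (hrow i) (hcol i))
    _ = 2 * (n * B) := by
        simp only [Finset.sum_const, Finset.card_univ, Fintype.card_fin, nsmul_eq_mul]
        ring

end Array

lemma sum_abs_div_sub_one_le_of_sum_lt {ι : Type*} [Fintype ι] {f : ι → ℝ} {p δ : ℝ}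
    (hp : 0 < p) (hf : ∀ i, 0 ≤ f i) (hsum : ∑ i, f i < (1 + δ) * (p * Fintype.card ι)) :
    ∑ i, |f i / p - 1| ≤ (2 + δ) * Fintype.card ι := by
  have hdiv : ∑ i, f i / p ≤ (1 + δ) * Fintype.card ι := by
    rw [← Finset.sum_div, div_le_iff₀ hp]
    linarith
  calc ∑ i, |f i / p - 1| ≤ ∑ i, (f i / p + 1) := Finset.sum_le_sum fun i _ => by
        have := div_nonneg (hf i) hp.le
        rw [abs_le]; constructor <;> linarith
    _ = ∑ i, f i / p + Fintype.card ι := by simp [Finset.sum_add_distrib]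
    _ ≤ (2 + δ) * Fintype.card ι := by linarith

lemma ae_eventually_notMem_of_summable {Ω : Type*} [MeasurableSpace Ω] {μ : Measure Ω}
    [IsFiniteMeasure μ] {s : ℕ → Set Ω} {b : ℕ → ℝ} (hb : Summable b)
    (hs : ∀ᶠ n in atTop, μ.real (s n) ≤ b n) : ∀ᵐ ω ∂μ, ∀ᶠ n in atTop, ω ∉ s n := by
  have hsum : Summable fun n => μ.real (s n) := hb.of_norm_bounded_eventually_nat <| by
    filter_upwards [hs] with n hn
    rwa [norm_of_nonneg measureReal_nonneg]
  refine ae_eventually_notMem ?_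
  rw [tsum_congr fun n => (ofReal_measureReal (μ := μ) (s := s n)).symm,
    ← ENNReal.ofReal_tsum_of_nonneg (fun _ => measureReal_nonneg) hsum]
  exact ENNReal.ofReal_ne_top

/-- Borel–Cantelli control of the maximal row/column dilution of Erdős–Rényi arrays:
if `∑_n n·exp(−3(K−2)²/(6+2(K−2)) p_n n) < ∞` then, almost surely, eventually all rows
and columns satisfy `∑_j |ξ^{(n)}_{i,j}/p_n − 1| ≤ Kn`. -/
theorem stmt_4 {Ω : Type*} [MeasurableSpace Ω] (μ : Measure Ω) [IsProbabilityMeasure μ]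
    (K : ℝ) (hK : 2 < K) (p : ℕ → ℝ) (hp : ∀ n, p n ∈ Set.Ioo (0 : ℝ) 1)
    (ξ : (n : ℕ) → Fin n → Fin n → Ω → ℝ)
    (hmeas : ∀ n i j, Measurable (ξ n i j))
    (hindep : ∀ n, 2 ≤ n →
      iIndepFun
        (fun (ij : Fin n × Fin n) ω => ξ n ij.1 ij.2 ω) μ)
    (hval : ∀ n i j ω, ξ n i j ω = 0 ∨ ξ n i j ω = 1)
    (hber : ∀ n, 2 ≤ n → ∀ (i j : Fin n),
      μ {ω | ξ n i j ω = 1} = ENNReal.ofReal (p n))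
    (hsum : Summable (fun n : ℕ =>
      (n : ℝ) * Real.exp (-(3 * (K - 2) ^ 2 / (6 + 2 * (K - 2))) * (p n * n)))) :
    ∀ᵐ ω ∂μ, ∃ n₀ : ℕ, ∀ n, n₀ ≤ n → ∀ i : Fin n,
      (∑ j, |ξ n i j ω / p n - 1|) ≤ K * n ∧
      (∑ j, |ξ n j i ω / p n - 1|) ≤ K * n := by
  have hbad := (eventually_ge_atTop 2).mono fun n hn =>
    measureReal_rowOrColSumGe_le (δ := K - 2) (hmeas n) (hindep n hn) (hval n) (hp n).1.le
      (hber n hn) (by linarith)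
  filter_upwards [ae_eventually_notMem_of_summable (hsum.mul_left 2) hbad] with ω hω
  obtain ⟨n₀, hn₀⟩ := eventually_atTop.1 hω
  refine ⟨n₀, fun n hn i => ?_⟩
  have hnonneg (i j : Fin n) : 0 ≤ ξ n i j ω := by rcases hval n i j ω with h | h <;> simp [h]
  simp only [rowOrColSumGe, mem_iUnion, mem_union, mem_ofPred_eq, not_exists, not_or, not_le]
    at hn₀
  obtain ⟨hrow, hcol⟩ := hn₀ n hn i
  constructor
  · simpa using sum_abs_div_sub_one_le_of_sum_lt (f := (ξ n i · ω)) (δ := K - 2) (hp n).1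
      (hnonneg i) (by simpa using hrow)
  · simpa using sum_abs_div_sub_one_le_of_sum_lt (f := (ξ n · i ω)) (δ := K - 2) (hp n).1
      (hnonneg · i) (by simpa using hcol)
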